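/- The 13 vectors of the Yu-Oh set in ℝ³, namely v1=(1,0,0), v2=(0,1,0), v3=(0,0,1), v4=(0,1,-1), v5=(1,0,-1), v6=(1,-1,0), v7=(0,1,1), v8=(1,0,1), v9=(1,1,0), vA=(-1,1,1), vB=(1,-1,1), vC=(1,1,-1), vD=(1,1,1), admit a function λ: Fin 13 → Fin 2 with λ(v1)=λ(v5)=λ(v6)=1 and λ(v)=0 for all other v, which satisfies: λ(u)·λ(w)=0 whenever ⟨u,w⟩=0, and for every triple of pairwise orthogonal vectors from the set, exactly one of them is assigned 1. -/
import Mathlib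


/-- Standard dot product on ℝ³ (as `Fin 3 → ℝ`). -/
def dot (u v : Fin 3 → ℝ) : ℝ := ∑ i, u i * v i

/-- The 13 vectors of the Yu-Oh set. -/
def yuOh : Fin 13 → Fin 3 → ℝ :=
  ![![1,0,0], ![0,1,0], ![0,0,1], ![0,1,-1], ![1,0,-1], ![1,-1,0],
    ![0,1,1], ![1,0,1], ![1,1,0], ![-1,1,1], ![1,-1,1], ![1,1,-1], ![1,1,1]]

/-- A Kochen-Specker assignment on the Yu-Oh set: orthogonal vectors never both
get 1, and every triple of pairwise orthogonal vectors has assignments summing to 1. -/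
def IsKS (l : Fin 13 → Fin 2) : Prop :=
  (∀ i j : Fin 13, dot (yuOh i) (yuOh j) = 0 → ((l i : ℕ) * (l j : ℕ) = 0)) ∧
  (∀ i j k : Fin 13, i ≠ j → i ≠ k → j ≠ k →
    dot (yuOh i) (yuOh j) = 0 → dot (yuOh i) (yuOh k) = 0 → dot (yuOh j) (yuOh k) = 0 →
    ((l i : ℕ) + (l j : ℕ) + (l k : ℕ) = 1))

def iy : Fin 13 → Fin 3 → ℤ :=
  ![![1,0,0], ![0,1,0], ![0,0,1], ![0,1,-1], ![1,0,-1], ![1,-1,0],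
    ![0,1,1], ![1,0,1], ![1,1,0], ![-1,1,1], ![1,-1,1], ![1,1,-1], ![1,1,1]]

def idot (i j : Fin 13) : ℤ := ∑ k, iy i k * iy j k

lemma yuOh_cast (i : Fin 13) (k : Fin 3) : yuOh i k = ((iy i k : ℤ) : ℝ) := by
  fin_cases i <;> fin_cases k <;> norm_num [yuOh, iy]

lemma dot_eq (i j : Fin 13) : dot (yuOh i) (yuOh j) = ((idot i j : ℤ) : ℝ) := by
  simp [dot, idot, yuOh_cast]

lemma dot_zero_iff (i j : Fin 13) : dot (yuOh i) (yuOh j) = 0 ↔ idot i j = 0 := by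
  rw [dot_eq]; exact_mod_cast Int.cast_eq_zero

theorem stmt0 :
    ∃ l : Fin 13 → Fin 2,
      (∀ i : Fin 13, l i = if i = 0 ∨ i = 4 ∨ i = 5 then 1 else 0) ∧ IsKS l := by
  refine ⟨fun i => if i = 0 ∨ i = 4 ∨ i = 5 then 1 else 0, fun i => rfl, ?_, ?_⟩
  · intro i j h
    rw [dot_zero_iff] at h
    revert h; revert i j; decide
  · intro i j k hij hik hjk h1 h2 h3
    rw [dot_zero_iff] at h1 h2 h3
    revert h1 h2 h3; revert hij hik hjk; revert i j k; decide
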